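/- arXiv:2510.08882 — 2 statements merged into one kernel-verified Lean document; each statement's English description precedes it below -/
import Mathlib

section
/- Empirical Freedman inequality: Let (Ω, 𝔉, P) be a probability space with a filtration 𝔉_1 ⊆ 𝔉_2 ⊆ ⋯, and let X_1, …, X_T be real random variables such that each X_t is 𝔉_{t+1}-measurable, and set μ_t = E[X_t | 𝔉_t]. Assume max{X_t − μ_t, X_t} ≤ B almost surely for some constant B > 0. Then for every α ≥ 4B and every δ ∈ (0,1), with probability at least 1 − δ, Σ_{t=1}^T (μ_t − X_t) ≤ (4/α) · Σ_{t=1}^T X_t² + α · log(1/δ). -/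
/-!
With `l = 1/α`, the increments `Y_t = l (μ_t − X_t) − 4 l² X_t²` satisfy `E[exp Y_t | ℱ_t] ≤ 1`:
factor `exp Y_t = exp (l μ_t) · exp (−l X_t − 4 l² X_t²)`, bound the second factor by `1 − l X_t`
(valid because `l X_t ≤ 1/4`), pull out the `ℱ_t`-measurable first factor and use
`exp (l μ_t) (1 − l μ_t) ≤ 1`. Hence `exp (Σ Y_t)` is a supermartingale with expectation at
most `1`, Markov's inequality gives `Σ Y_t ≤ log (1/δ)` with probability at least `1 − δ`, and
multiplying by `α` turns this into the claim.
-/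

open MeasureTheory Finset Real

lemma Real.neg_sub_four_mul_sq_le (s : ℝ) : -s - 4 * s ^ 2 ≤ 1 / 16 := by
  nlinarith [sq_nonneg (2 * s + 1 / 4)]

lemma Real.exp_neg_sub_four_mul_sq_le_one_sub {s : ℝ} (hs : s ≤ 1 / 4) :
    exp (-s - 4 * s ^ 2) ≤ 1 - s := by
  have hpos : 0 < 1 + (s + 4 * s ^ 2) := by linarith [neg_sub_four_mul_sq_le s]
  calc exp (-s - 4 * s ^ 2) = (exp (s + 4 * s ^ 2))⁻¹ := by rw [← exp_neg]; ring_nf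
    _ ≤ (1 + (s + 4 * s ^ 2))⁻¹ := by
      gcongr; linarith [add_one_le_exp (s + 4 * s ^ 2)]
    _ ≤ 1 - s := by
      rw [inv_le_iff_one_le_mul₀ hpos]
      nlinarith [sq_nonneg s]

section

variable {Ω : Type*} {m m0 : MeasurableSpace Ω} {P : Measure Ω}

lemma integrable_exp_of_ae_le [IsFiniteMeasure P] {f : Ω → ℝ} {C : ℝ}
    (hf : AEStronglyMeasurable f P) (hfC : ∀ᵐ ω ∂P, f ω ≤ C) :
    Integrable (fun ω => exp (f ω)) P := by
  refine (integrable_const (exp C)).mono' (continuous_exp.comp_aestronglyMeasurable hf) ?_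
  filter_upwards [hfC] with ω hω
  rw [norm_of_nonneg (exp_pos _).le]
  exact exp_le_exp.2 hω

lemma condExp_le_const_of_ae_le [IsFiniteMeasure P] (hm : m ≤ m0) {X : Ω → ℝ} {B : ℝ}
    (hX : Integrable X P) (hXB : ∀ᵐ ω ∂P, X ω ≤ B) : ∀ᵐ ω ∂P, P[X|m] ω ≤ B := by
  have h := condExp_mono (m := m) hX (integrable_const B) hXB
  rwa [condExp_const hm B] at h

lemma integrable_exp_neg_sub_four_mul_sq [IsFiniteMeasure P] {X : Ω → ℝ}
    (hX : AEStronglyMeasurable X P) (l : ℝ) :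
    Integrable (fun ω => exp (-(l * X ω) - 4 * (l * X ω) ^ 2)) P :=
  integrable_exp_of_ae_le (by fun_prop) (ae_of_all _ fun ω => neg_sub_four_mul_sq_le (l * X ω))

noncomputable def freedmanIncrement (P : Measure Ω) (m : MeasurableSpace Ω) (X : Ω → ℝ) (l : ℝ)
    (ω : Ω) : ℝ :=
  l * (P[X|m] ω - X ω) - 4 * l ^ 2 * X ω ^ 2

lemma stronglyMeasurable_freedmanIncrement {m' : MeasurableSpace Ω} (hmm' : m ≤ m') {X : Ω → ℝ}
    (hX : StronglyMeasurable[m'] X) (l : ℝ) :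
    StronglyMeasurable[m'] (freedmanIncrement P m X l) :=
  (((stronglyMeasurable_condExp.mono hmm').sub hX).const_mul l).sub ((hX.pow 2).const_mul _)

variable [IsFiniteMeasure P] {X : Ω → ℝ} {B l : ℝ}

lemma freedmanIncrement_le (hm : m ≤ m0) (hX : Integrable X P) (hl : 0 ≤ l)
    (hXB : ∀ᵐ ω ∂P, X ω ≤ B) : ∀ᵐ ω ∂P, freedmanIncrement P m X l ω ≤ l * B + 1 / 16 := by
  filter_upwards [condExp_le_const_of_ae_le hm hX hXB] with ω hω
  have := mul_le_mul_of_nonneg_left hω hl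
  have := neg_sub_four_mul_sq_le (l * X ω)
  unfold freedmanIncrement
  linarith

lemma condExp_exp_neg_sub_four_mul_sq_le (hm : m ≤ m0) (hX : Integrable X P) (hl : 0 ≤ l)
    (hlB : l * B ≤ 1 / 4) (hXB : ∀ᵐ ω ∂P, X ω ≤ B) :
    P[fun ω => exp (-(l * X ω) - 4 * (l * X ω) ^ 2)|m] ≤ᵐ[P] fun ω => 1 - l * P[X|m] ω := by
  have hle : (fun ω => exp (-(l * X ω) - 4 * (l * X ω) ^ 2)) ≤ᵐ[P] fun ω => 1 - l * X ω := by
    filter_upwards [hXB] with ω hω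
    exact exp_neg_sub_four_mul_sq_le_one_sub ((mul_le_mul_of_nonneg_left hω hl).trans hlB)
  have hlin : P[fun ω => 1 - l * X ω|m] =ᵐ[P] fun ω => 1 - l * P[X|m] ω := by
    filter_upwards [condExp_sub (m := m) (integrable_const (1 : ℝ)) (hX.const_mul l),
      condExp_smul (μ := P) l X m] with ω hsub hsmul
    rw [Pi.sub_apply, condExp_const hm] at hsub
    exact hsub.trans (congrArg (1 - ·) hsmul)
  have hmono := condExp_mono (m := m) (integrable_exp_neg_sub_four_mul_sq hX.1 l)
    ((integrable_const 1).sub (hX.const_mul l)) hle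
  filter_upwards [hmono, hlin] with ω hmono hω
  exact hmono.trans_eq hω

lemma condExp_exp_freedmanIncrement_le_one (hm : m ≤ m0) (hX : Integrable X P) (hl : 0 ≤ l)
    (hlB : l * B ≤ 1 / 4) (hXB : ∀ᵐ ω ∂P, X ω ≤ B) :
    P[fun ω => exp (freedmanIncrement P m X l ω)|m] ≤ᵐ[P] 1 := by
  set f : Ω → ℝ := fun ω => exp (l * P[X|m] ω)
  set g : Ω → ℝ := fun ω => exp (-(l * X ω) - 4 * (l * X ω) ^ 2)
  have hfg : (fun ω => exp (freedmanIncrement P m X l ω)) = f * g := by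
    funext ω
    simp only [Pi.mul_apply, f, g, freedmanIncrement, ← exp_add]
    ring_nf
  have hf : StronglyMeasurable[m] f :=
    continuous_exp.comp_stronglyMeasurable (stronglyMeasurable_condExp.const_mul l)
  have hg : Integrable g P := integrable_exp_neg_sub_four_mul_sq hX.1 l
  have hf_bdd : ∀ᵐ ω ∂P, ‖f ω‖ ≤ exp (l * B) := by
    filter_upwards [condExp_le_const_of_ae_le hm hX hXB] with ω hω
    rw [norm_of_nonneg (exp_pos _).le]
    exact exp_le_exp.2 (mul_le_mul_of_nonneg_left hω hl)
  have hpull : P[f * g|m] =ᵐ[P] f * P[g|m] :=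
    condExp_mul_of_stronglyMeasurable_left hf
      (hg.bdd_mul (hf.mono hm).aestronglyMeasurable hf_bdd) hg
  rw [hfg]
  filter_upwards [hpull, condExp_exp_neg_sub_four_mul_sq_le hm hX hl hlB hXB] with ω hω hgω
  calc (P[f * g|m]) ω = f ω * P[g|m] ω := hω
    _ ≤ exp (l * P[X|m] ω) * exp (-(l * P[X|m] ω)) := by
      gcongr
      linarith [add_one_le_exp (-(l * P[X|m] ω))]
    _ = 1 := by rw [← exp_add, add_neg_cancel, exp_zero]

end

section

variable {Ω : Type*} {m0 : MeasurableSpace Ω} {P : Measure Ω} {ℱ : Filtration ℕ m0}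
  {Y : ℕ → Ω → ℝ} {C : ℝ}

lemma stronglyMeasurable_sum_Icc {n : ℕ}
    (hY : ∀ t ∈ Icc 1 n, StronglyMeasurable[ℱ (t + 1)] (Y t)) :
    StronglyMeasurable[ℱ (n + 1)] (fun ω => ∑ t ∈ Icc 1 n, Y t ω) :=
  Finset.stronglyMeasurable_fun_sum _ fun t ht =>
    (hY t ht).mono (ℱ.mono (by simp only [mem_Icc] at ht; omega))

lemma integrable_exp_sum_Icc [IsFiniteMeasure P] {n : ℕ}
    (hY : ∀ t ∈ Icc 1 n, StronglyMeasurable[ℱ (t + 1)] (Y t))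
    (hYC : ∀ t ∈ Icc 1 n, ∀ᵐ ω ∂P, Y t ω ≤ C) :
    Integrable (fun ω => exp (∑ t ∈ Icc 1 n, Y t ω)) P := by
  refine integrable_exp_of_ae_le (C := #(Icc 1 n) • C)
    ((stronglyMeasurable_sum_Icc hY).mono (ℱ.le _)).aestronglyMeasurable ?_
  filter_upwards [(Filter.eventually_all_finset _).2 hYC] with ω hω
  exact sum_le_card_nsmul _ _ _ hω

lemma integral_exp_sum_Icc_le_one [IsProbabilityMeasure P] (n : ℕ)
    (hY : ∀ t ∈ Icc 1 n, StronglyMeasurable[ℱ (t + 1)] (Y t))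
    (hYC : ∀ t ∈ Icc 1 n, ∀ᵐ ω ∂P, Y t ω ≤ C)
    (hcond : ∀ t ∈ Icc 1 n, P[fun ω => exp (Y t ω)|ℱ t] ≤ᵐ[P] 1) :
    ∫ ω, exp (∑ t ∈ Icc 1 n, Y t ω) ∂P ≤ 1 := by
  induction n with
  | zero => simp
  | succ n ih =>
    have hsub : Icc 1 n ⊆ Icc 1 (n + 1) := Icc_subset_Icc_right n.le_succ
    have hlast : n + 1 ∈ Icc 1 (n + 1) := by simp
    set f : Ω → ℝ := fun ω => exp (∑ t ∈ Icc 1 n, Y t ω)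
    set g : Ω → ℝ := fun ω => exp (Y (n + 1) ω)
    have hS := stronglyMeasurable_sum_Icc (fun t ht => hY t (hsub ht))
    have hf : Integrable f P :=
      integrable_exp_sum_Icc (fun t ht => hY t (hsub ht)) (fun t ht => hYC t (hsub ht))
    have hfg : (fun ω => exp (∑ t ∈ Icc 1 (n + 1), Y t ω)) = f * g := by
      funext ω
      rw [sum_Icc_succ_top (by omega), exp_add]; rfl
    have hfg_int : Integrable (f * g) P := hfg ▸ integrable_exp_sum_Icc hY hYC
    have hpull : P[f * g|ℱ (n + 1)] =ᵐ[P] f * P[g|ℱ (n + 1)] :=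
      condExp_mul_of_stronglyMeasurable_left (continuous_exp.comp_stronglyMeasurable hS) hfg_int
        (integrable_exp_of_ae_le ((hY _ hlast).mono (ℱ.le _)).aestronglyMeasurable (hYC _ hlast))
    calc ∫ ω, exp (∑ t ∈ Icc 1 (n + 1), Y t ω) ∂P
        = ∫ ω, (P[f * g|ℱ (n + 1)]) ω ∂P := by rw [hfg, integral_condExp (ℱ.le _)]
      _ ≤ ∫ ω, f ω ∂P := by
        refine integral_mono_ae integrable_condExp hf ?_
        filter_upwards [hpull, hcond _ hlast] with ω hω hgω
        rw [hω, Pi.mul_apply]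
        exact mul_le_of_le_one_right (exp_pos _).le hgω
      _ ≤ 1 := ih (fun t ht => hY t (hsub ht)) (fun t ht => hYC t (hsub ht))
          (fun t ht => hcond t (hsub ht))

lemma one_sub_le_measureReal_le_log_of_integral_exp_le_one [IsProbabilityMeasure P]
    {S : Ω → ℝ} (hS : Integrable (fun ω => exp (S ω)) P) (h : ∫ ω, exp (S ω) ∂P ≤ 1)
    {δ : ℝ} (hδ : 0 < δ) :
    1 - δ ≤ P.real {ω | S ω ≤ log (1 / δ)} := by
  have hmarkov : 1 / δ * P.real {ω | 1 / δ ≤ exp (S ω)} ≤ 1 :=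
    (mul_meas_ge_le_integral_of_nonneg (ae_of_all _ fun ω => (exp_pos _).le) hS _).trans h
  have htail : P.real {ω | 1 / δ ≤ exp (S ω)} ≤ δ := by
    rwa [one_div, inv_mul_le_iff₀ hδ, mul_one, ← one_div] at hmarkov
  calc 1 - δ ≤ 1 - P.real {ω | 1 / δ ≤ exp (S ω)} := by linarith
    _ = P.real {ω | 1 / δ ≤ exp (S ω)}ᶜ :=
      (probReal_compl_eq_one_sub₀ (nullMeasurableSet_le aemeasurable_const hS.aemeasurable)).symm
    _ ≤ P.real {ω | S ω ≤ log (1 / δ)} := measureReal_mono fun ω hω =>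
      ((lt_log_iff_exp_lt (by positivity)).2 (not_le.1 hω)).le

end

lemma sum_freedmanIncrement {Ω ι : Type*} {m0 : MeasurableSpace Ω} (P : Measure Ω)
    (m : ι → MeasurableSpace Ω) (X : ι → Ω → ℝ) (l : ℝ) (s : Finset ι) (ω : Ω) :
    ∑ t ∈ s, freedmanIncrement P (m t) (X t) l ω =
      l * ∑ t ∈ s, (P[X t|m t] ω - X t ω) - 4 * l ^ 2 * ∑ t ∈ s, X t ω ^ 2 := by
  rw [mul_sum, mul_sum, ← sum_sub_distrib]
  rfl

theorem empirical_freedman_inequality_general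
    {Ω : Type*} {m0 : MeasurableSpace Ω} (P : Measure Ω) [IsProbabilityMeasure P]
    (ℱ : Filtration ℕ m0) (T : ℕ) (X : ℕ → Ω → ℝ) (B : ℝ) (hB : 0 < B)
    (hmeas : ∀ t ∈ Icc 1 T, StronglyMeasurable[ℱ (t + 1)] (X t))
    (hint : ∀ t ∈ Icc 1 T, Integrable (X t) P)
    (hbdd : ∀ t ∈ Icc 1 T, ∀ᵐ ω ∂P,
      max (X t ω - (P[X t | ℱ t]) ω) (X t ω) ≤ B)
    (α : ℝ) (hα : 4 * B ≤ α) (δ : ℝ) (hδ0 : 0 < δ) :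
    (1 : ℝ) - δ ≤
      (P {ω | ∑ t ∈ Icc 1 T, ((P[X t | ℱ t]) ω - X t ω) ≤
          (4 / α) * ∑ t ∈ Icc 1 T, (X t ω) ^ 2 + α * Real.log (1 / δ)}).toReal := by
  have hα0 : 0 < α := by linarith
  have hl : 0 ≤ α⁻¹ := inv_nonneg.2 hα0.le
  have hlB : α⁻¹ * B ≤ 1 / 4 := by rw [inv_mul_le_iff₀ hα0]; linarith
  have hXB : ∀ t ∈ Icc 1 T, ∀ᵐ ω ∂P, X t ω ≤ B := fun t ht =>
    (hbdd t ht).mono fun _ h => (le_max_right _ _).trans h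
  set Y : ℕ → Ω → ℝ := fun t => freedmanIncrement P (ℱ t) (X t) α⁻¹
  have hY : ∀ t ∈ Icc 1 T, StronglyMeasurable[ℱ (t + 1)] (Y t) := fun t ht =>
    stronglyMeasurable_freedmanIncrement (ℱ.mono t.le_succ) (hmeas t ht) _
  have hYC := fun t ht => freedmanIncrement_le (ℱ.le t) (hint t ht) hl (hXB t ht)
  have hcond := fun t ht =>
    condExp_exp_freedmanIncrement_le_one (ℱ.le t) (hint t ht) hl hlB (hXB t ht)
  refine (one_sub_le_measureReal_le_log_of_integral_exp_le_one (integrable_exp_sum_Icc hY hYC)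
    (integral_exp_sum_Icc_le_one T hY hYC hcond) hδ0).trans (measureReal_mono fun ω hω => ?_)
  simp only [Set.mem_ofPred_eq, Y, sum_freedmanIncrement] at hω ⊢
  calc ∑ t ∈ Icc 1 T, (P[X t|ℱ t] ω - X t ω)
      = α * (α⁻¹ * ∑ t ∈ Icc 1 T, (P[X t|ℱ t] ω - X t ω)
          - 4 * α⁻¹ ^ 2 * ∑ t ∈ Icc 1 T, X t ω ^ 2) + 4 / α * ∑ t ∈ Icc 1 T, X t ω ^ 2 := by
        field_simp; ring
    _ ≤ α * log (1 / δ) + 4 / α * ∑ t ∈ Icc 1 T, X t ω ^ 2 := by gcongr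
    _ = _ := by ring

/-- Empirical Freedman inequality: let `(Ω, 𝔉, P)` be a probability space with a filtration
`ℱ`, and `X_1, …, X_T` real random variables with `X_t` being `ℱ_{t+1}`-measurable, and
`μ_t = E[X_t | ℱ_t]`. If `max{X_t − μ_t, X_t} ≤ B` almost surely for a constant `B > 0`,
then for every `α ≥ 4B` and `δ ∈ (0,1)`, with probability at least `1 − δ`,
`Σ_{t=1}^T (μ_t − X_t) ≤ (4/α) Σ_{t=1}^T X_t² + α log(1/δ)`. -/
theorem empirical_freedman_inequality
    {Ω : Type*} {m0 : MeasurableSpace Ω} (P : Measure Ω) [IsProbabilityMeasure P]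
    (ℱ : Filtration ℕ m0) (T : ℕ) (X : ℕ → Ω → ℝ) (B : ℝ) (hB : 0 < B)
    (hmeas : ∀ t ∈ Icc 1 T, StronglyMeasurable[ℱ (t + 1)] (X t))
    (hint : ∀ t ∈ Icc 1 T, Integrable (X t) P)
    (hbdd : ∀ t ∈ Icc 1 T, ∀ᵐ ω ∂P,
      max (X t ω - (P[X t | ℱ t]) ω) (X t ω) ≤ B)
    (α : ℝ) (hα : 4 * B ≤ α) (δ : ℝ) (hδ0 : 0 < δ) (hδ1 : δ < 1) :
    (1 : ℝ) - δ ≤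
      (P {ω | ∑ t ∈ Icc 1 T, ((P[X t | ℱ t]) ω - X t ω) ≤
          (4 / α) * ∑ t ∈ Icc 1 T, (X t ω) ^ 2 + α * Real.log (1 / δ)}).toReal :=
  empirical_freedman_inequality_general P ℱ T X B hB hmeas hint hbdd α hα δ hδ0
end

section
/- Dig-DEC is bounded by optimistic DEC plus η (stochastic setting): Let Π, O, Φ be finite nonempty sets and 𝓜 a finite nonempty set (the model class). For each M ∈ 𝓜 let V_M : Π → [0,1] (value function) and q_M : Π → Δ(O) (observation kernel). Let c : 𝓜 → Φ be a map, and for each φ ∈ Φ let π_φ ∈ Π and v_φ ∈ [0,1] be such that every M ∈ 𝓜 satisfies V_M(π_{c(M)}) = max_{π∈Π} V_M(π) = v_{c(M)}; write π_M = π_{c(M)}. Let D̄ : Π × Φ × 𝓜 → [0, ∞) be an arbitrary function. For ν ∈ Δ(𝓜) define the marginal ν_Φ(φ) = Σ_{M : c(M)=φ} ν(M) and, for π ∈ Π and o ∈ O with Σ_{M} ν(M) q_M(o|π) > 0, the posterior ν_Φ(φ | π, o) = Σ_{M : c(M)=φ} ν(M) q_M(o|π) / Σ_{M} ν(M) q_M(o|π).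 For η > 0 define dig-dec_η = sup_{ρ∈Δ(Φ)} inf_{p∈Δ(Π)} sup_{ν∈Δ(𝓜)} E_{π∼p} E_{M∼ν} [ V_M(π_M) − V_M(π) − (1/η) E_{o∼q_M(·|π)}[ KL(ν_Φ(·|π,o), ρ) ] − (1/η) E_{φ∼ρ}[ D̄(π, φ, M) ] ], and o-dec_η = sup_{ρ∈Δ(Φ)} inf_{p∈Δ(Π)} sup_{ν∈Δ(𝓜)} E_{π∼p} E_{M∼ν} E_{φ∼ρ} [ v_φ − V_M(π) − (1/η) D̄(π, φ, M) ], where the expectations are taken in the extended reals (KL may equal +∞, making the inner expression −∞). Then for every η > 0, dig-dec_η ≤ o-dec_η + η. -/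
open Finset
open scoped ENNReal

noncomputable section

/-- Numerator of the posterior over infosets: `Σ_{M : c(M)=φ} ν(M) q_M(o|π)`. -/
def postNum {Pol Obs Phi Mod : Type*} [Fintype Mod] [DecidableEq Phi]
    (q : Mod → Pol → Obs → ℝ) (c : Mod → Phi)
    (ν : Mod → ℝ) (π : Pol) (o : Obs) (φ : Phi) : ℝ :=
  ∑ M ∈ univ.filter (fun M => c M = φ), ν M * q M π o

/-- Marginal mass of an observation: `Σ_M ν(M) q_M(o|π)`. -/
def obsMass {Pol Obs Mod : Type*} [Fintype Mod]
    (q : Mod → Pol → Obs → ℝ) (ν : Mod → ℝ) (π : Pol) (o : Obs) : ℝ :=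
  ∑ M, ν M * q M π o

/-- The posterior over infosets: `ν_Φ(φ | π, o)`. -/
def posterior {Pol Obs Phi Mod : Type*} [Fintype Mod] [DecidableEq Phi]
    (q : Mod → Pol → Obs → ℝ) (c : Mod → Phi)
    (ν : Mod → ℝ) (π : Pol) (o : Obs) : Phi → ℝ :=
  fun φ => postNum q c ν π o φ / obsMass q ν π o

/-- KL divergence between distributions on a finite set, valued in `ℝ≥0∞`: it is
`Σ_φ a(φ) log(a(φ)/b(φ))` under absolute continuity (`0·log(0/b(φ)) = 0` automatic),
and `+∞` otherwise. -/
def klENN {Phi : Type*} [Fintype Phi] (a b : Phi → ℝ) : ℝ≥0∞ :=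
  if ∀ φ, b φ = 0 → a φ = 0 then
    ENNReal.ofReal (∑ φ, a φ * Real.log (a φ / b φ))
  else ⊤

/-- The expected posterior KL term
`E_{π∼p} E_{M∼ν} E_{o∼q_M(·|π)}[ KL(ν_Φ(·|π,o), ρ) ]`, in `ℝ≥0∞`; observations of zero
marginal mass contribute `0` (since `0 · ⊤ = 0` in `ℝ≥0∞`). -/
def expectedKL {Pol Obs Phi Mod : Type*}
    [Fintype Pol] [Fintype Obs] [Fintype Phi] [Fintype Mod] [DecidableEq Phi]
    (q : Mod → Pol → Obs → ℝ) (c : Mod → Phi)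
    (p : Pol → ℝ) (ν : Mod → ℝ) (ρ : Phi → ℝ) : ℝ≥0∞ :=
  ∑ π, ∑ o, ENNReal.ofReal (p π * obsMass q ν π o) * klENN (posterior q c ν π o) ρ

/-- The inner objective of the dual-information-gain DEC, valued in the extended reals
(it is `−∞` whenever the expected-KL term is `+∞`). -/
def digInner {Pol Obs Phi Mod : Type*}
    [Fintype Pol] [Fintype Obs] [Fintype Phi] [Fintype Mod] [DecidableEq Phi]
    (V : Mod → Pol → ℝ) (q : Mod → Pol → Obs → ℝ) (c : Mod → Phi) (piMap : Phi → Pol)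
    (Dbar : Pol → Phi → Mod → ℝ) (η : ℝ)
    (ρ : Phi → ℝ) (p : Pol → ℝ) (ν : Mod → ℝ) : EReal :=
  ((∑ π, p π * ∑ M, ν M *
      (V M (piMap (c M)) - V M π - (1 / η) * ∑ φ, ρ φ * Dbar π φ M) : ℝ) : EReal)
    - ((ENNReal.ofReal (1 / η) * expectedKL q c p ν ρ : ℝ≥0∞) : EReal)

/-- The dual-information-gain decision–estimation coefficient `dig-dec_η`. -/
def digDec {Pol Obs Phi Mod : Type*}
    [Fintype Pol] [Fintype Obs] [Fintype Phi] [Fintype Mod] [DecidableEq Phi]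
    (V : Mod → Pol → ℝ) (q : Mod → Pol → Obs → ℝ) (c : Mod → Phi) (piMap : Phi → Pol)
    (Dbar : Pol → Phi → Mod → ℝ) (η : ℝ) : EReal :=
  ⨆ ρ ∈ stdSimplex ℝ Phi, ⨅ p ∈ stdSimplex ℝ Pol, ⨆ ν ∈ stdSimplex ℝ Mod,
    digInner V q c piMap Dbar η ρ p ν

/-- The optimistic decision–estimation coefficient `o-dec_η`. -/
def oDec {Pol Phi Mod : Type*} [Fintype Pol] [Fintype Phi] [Fintype Mod]
    (V : Mod → Pol → ℝ) (v : Phi → ℝ) (Dbar : Pol → Phi → Mod → ℝ) (η : ℝ) : EReal :=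
  ⨆ ρ ∈ stdSimplex ℝ Phi, ⨅ p ∈ stdSimplex ℝ Pol, ⨆ ν ∈ stdSimplex ℝ Mod,
    ((∑ π, p π * ∑ M, ν M * ∑ φ, ρ φ * (v φ - V M π - (1 / η) * Dbar π φ M) : ℝ) : EReal)

/-!
Fix `ρ`, `p`, `ν` and let `μ = ν_Φ`. Since `V_M(π_M) = v_{c(M)}`, the dig-DEC integrand exceeds
the o-DEC integrand by `E_μ v − E_ρ v − (1/η) E[KL(ν_Φ(·|π,o), ρ)]`, so it suffices to bound the
expected KL below by `η (E_μ v − E_ρ v) − η²`. For a single distribution `a` in place of `μ` this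
is the Gibbs variational inequality `η E_a v ≤ KL(a, ρ) + E_ρ e^{η v} − 1` combined with
`eˣ ≤ 1 + x + x²` on `[0, 1]` (for `η > 1` the bound is negative, hence trivial). The bound is
affine in `a`, and the posteriors average to `μ` under `π ∼ p`, `o ∼ Σ_M ν(M) q_M(·|π)`.
-/

lemma mul_le_mul_log_div_add_mul_exp_sub {a b : ℝ} (t : ℝ) (ha : 0 ≤ a) (hb : 0 ≤ b)
    (hab : b = 0 → a = 0) :
    a * t ≤ a * Real.log (a / b) + b * Real.exp t - a := by
  rcases hb.eq_or_lt with rfl | hb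
  · simp [hab rfl]
  rcases ha.eq_or_lt with rfl | ha
  · simp only [zero_mul, zero_div, Real.log_zero, mul_zero, zero_add, sub_zero]
    positivity
  -- `log y ≤ y - 1` at `y = b eᵗ / a`
  have hlog := Real.log_le_sub_one_of_pos (show 0 < b * Real.exp t / a by positivity)
  rw [Real.log_div (by positivity) ha.ne', Real.log_mul hb.ne' (Real.exp_ne_zero t),
    Real.log_exp, div_sub_one ha.ne', le_div_iff₀ ha] at hlog
  rw [Real.log_div ha.ne' hb.ne']
  nlinarith

lemma sum_mul_le_sum_mul_log_div_add_sum_mul_exp_sub_one {ι : Type*} [Fintype ι]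
    {a b : ι → ℝ} (f : ι → ℝ) (ha : a ∈ stdSimplex ℝ ι) (hb : ∀ i, 0 ≤ b i)
    (hab : ∀ i, b i = 0 → a i = 0) :
    ∑ i, a i * f i ≤ ∑ i, a i * Real.log (a i / b i) + ∑ i, b i * Real.exp (f i) - 1 := by
  calc ∑ i, a i * f i
      ≤ ∑ i, (a i * Real.log (a i / b i) + b i * Real.exp (f i) - a i) :=
        sum_le_sum fun i _ => mul_le_mul_log_div_add_mul_exp_sub (f i) (ha.1 i) (hb i) (hab i)
    _ = _ := by rw [sum_sub_distrib, sum_add_distrib, ha.2]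

lemma exp_le_one_add_add_sq {x : ℝ} (hx : |x| ≤ 1) : Real.exp x ≤ 1 + x + x ^ 2 := by
  linarith [(abs_le.mp (Real.abs_exp_sub_one_sub_id_le hx)).2]

lemma sum_mul_exp_mul_le {ι : Type*} [Fintype ι] {b v : ι → ℝ} (hb : b ∈ stdSimplex ℝ ι)
    (hv : ∀ i, v i ∈ Set.Icc (0 : ℝ) 1) {t : ℝ} (ht0 : 0 ≤ t) (ht1 : t ≤ 1) :
    ∑ i, b i * Real.exp (t * v i) ≤ 1 + t * ∑ i, b i * v i + t ^ 2 := by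
  calc ∑ i, b i * Real.exp (t * v i) ≤ ∑ i, (b i + t * (b i * v i) + t ^ 2 * b i) := by
        refine sum_le_sum fun i _ => ?_
        obtain ⟨hv0, hv1⟩ := hv i
        have htv : |t * v i| ≤ 1 := by
          rw [abs_of_nonneg (mul_nonneg ht0 hv0)]
          nlinarith
        have hsq : (t * v i) ^ 2 ≤ t ^ 2 := by
          rw [mul_pow]
          exact mul_le_of_le_one_right (sq_nonneg t) (pow_le_one₀ hv0 hv1)
        nlinarith [exp_le_one_add_add_sq htv, hb.1 i]
    _ = 1 + t * ∑ i, b i * v i + t ^ 2 := by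
      rw [sum_add_distrib, sum_add_distrib, ← mul_sum, ← mul_sum, hb.2, mul_one]

lemma ofReal_mul_sub_sq_le_klENN {ι : Type*} [Fintype ι] {a b v : ι → ℝ}
    (ha : a ∈ stdSimplex ℝ ι) (hb : b ∈ stdSimplex ℝ ι) (hv : ∀ i, v i ∈ Set.Icc (0 : ℝ) 1)
    {t : ℝ} (ht : 0 ≤ t) :
    ENNReal.ofReal (t * (∑ i, a i * v i - ∑ i, b i * v i) - t ^ 2) ≤ klENN a b := by
  by_cases hab : ∀ i, b i = 0 → a i = 0
  swap
  · simp [klENN, hab]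
  rw [klENN, if_pos hab]
  refine ENNReal.ofReal_le_ofReal ?_
  rcases le_or_gt t 1 with ht1 | ht1
  · have hDV := sum_mul_le_sum_mul_log_div_add_sum_mul_exp_sub_one (fun i => t * v i) ha hb.1 hab
    simp only [mul_left_comm _ t, ← mul_sum] at hDV
    linarith [sum_mul_exp_mul_le hb hv ht ht1]
  · have hGibbs := sum_mul_le_sum_mul_log_div_add_sum_mul_exp_sub_one 0 ha hb.1 hab
    simp only [Pi.zero_apply, mul_zero, sum_const_zero, Real.exp_zero, mul_one, hb.2] at hGibbs
    have hav : ∑ i, a i * v i ≤ 1 :=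
      ha.2 ▸ sum_le_sum fun i _ => mul_le_of_le_one_right (ha.1 i) (hv i).2
    have hbv : 0 ≤ ∑ i, b i * v i := sum_nonneg fun i _ => mul_nonneg (hb.1 i) (hv i).1
    nlinarith

section Posterior

variable {Pol Obs Phi Mod : Type*} [Fintype Mod] (q : Mod → Pol → Obs → ℝ) {ν : Mod → ℝ}

lemma obsMass_nonneg (hq0 : ∀ M π o, 0 ≤ q M π o) (hν : ν ∈ stdSimplex ℝ Mod) (π : Pol) (o : Obs) :
    0 ≤ obsMass q ν π o :=
  sum_nonneg fun M _ => mul_nonneg (hν.1 M) (hq0 M π o)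

lemma sum_obsMass [Fintype Obs] (hq1 : ∀ M π, ∑ o, q M π o = 1) (hν : ν ∈ stdSimplex ℝ Mod)
    (π : Pol) : ∑ o, obsMass q ν π o = 1 := by
  simp only [obsMass]
  rw [sum_comm]
  simp only [← mul_sum, hq1, mul_one, hν.2]

variable [DecidableEq Phi] (c : Mod → Phi)

lemma postNum_nonneg (hq0 : ∀ M π o, 0 ≤ q M π o) (hν : ν ∈ stdSimplex ℝ Mod) (π : Pol) (o : Obs)
    (φ : Phi) : 0 ≤ postNum q c ν π o φ :=
  sum_nonneg fun M _ => mul_nonneg (hν.1 M) (hq0 M π o)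

lemma sum_postNum [Fintype Phi] (π : Pol) (o : Obs) :
    ∑ φ, postNum q c ν π o φ = obsMass q ν π o :=
  sum_fiberwise _ c _

lemma posterior_mem_stdSimplex [Fintype Phi] (hq0 : ∀ M π o, 0 ≤ q M π o)
    (hν : ν ∈ stdSimplex ℝ Mod) {π : Pol} {o : Obs} (ho : 0 < obsMass q ν π o) :
    posterior q c ν π o ∈ stdSimplex ℝ Phi :=
  ⟨fun φ => div_nonneg (postNum_nonneg q c hq0 hν π o φ) ho.le,
    by simp only [posterior]; rw [← sum_div, sum_postNum, div_self ho.ne']⟩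

lemma obsMass_mul_sum_posterior_mul [Fintype Phi] (hq0 : ∀ M π o, 0 ≤ q M π o)
    (hν : ν ∈ stdSimplex ℝ Mod) (π : Pol) (o : Obs) (v : Phi → ℝ) :
    obsMass q ν π o * ∑ φ, posterior q c ν π o φ * v φ = ∑ φ, postNum q c ν π o φ * v φ := by
  rcases (obsMass_nonneg q hq0 hν π o).eq_or_lt with h | h
  · have hnum : ∀ φ, postNum q c ν π o φ = 0 := fun φ =>
      (sum_eq_zero_iff_of_nonneg fun φ _ => postNum_nonneg q c hq0 hν π o φ).mp
        ((sum_postNum q c π o).trans h.symm) φ (mem_univ φ)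
    simp [← h, hnum]
  · rw [mul_sum]
    refine sum_congr rfl fun φ _ => ?_
    simp only [posterior]
    rw [← mul_assoc, mul_div_cancel₀ _ h.ne']

lemma sum_sum_postNum_mul [Fintype Obs] [Fintype Phi] (hq1 : ∀ M π, ∑ o, q M π o = 1)
    (π : Pol) (v : Phi → ℝ) :
    ∑ o, ∑ φ, postNum q c ν π o φ * v φ = ∑ M, ν M * v (c M) := by
  have hfiber : ∀ o, ∑ φ, postNum q c ν π o φ * v φ = ∑ M, ν M * v (c M) * q M π o := by
    intro o
    rw [← sum_fiberwise univ c fun M => ν M * v (c M) * q M π o]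
    refine sum_congr rfl fun φ _ => ?_
    rw [postNum, sum_mul]
    refine sum_congr rfl fun M hM => ?_
    rw [(mem_filter.mp hM).2]
    ring
  simp only [hfiber]
  rw [sum_comm]
  simp only [← mul_sum, hq1, mul_one]

end Posterior

lemma ENNReal.ofReal_sum_le {ι : Type*} (s : Finset ι) (f : ι → ℝ) :
    ENNReal.ofReal (∑ i ∈ s, f i) ≤ ∑ i ∈ s, ENNReal.ofReal (f i) :=
  le_sum_of_subadditive _ ENNReal.ofReal_zero.le (fun _ _ => ENNReal.ofReal_add_le) s f

lemma ofReal_mul_sub_sq_le_expectedKL {Pol Obs Phi Mod : Type*} [Fintype Pol] [Fintype Obs]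
    [Fintype Phi] [Fintype Mod] [DecidableEq Phi]
    {q : Mod → Pol → Obs → ℝ} (hq0 : ∀ M π o, 0 ≤ q M π o) (hq1 : ∀ M π, ∑ o, q M π o = 1)
    (c : Mod → Phi) {v : Phi → ℝ} (hv : ∀ φ, v φ ∈ Set.Icc (0 : ℝ) 1)
    {ρ : Phi → ℝ} {p : Pol → ℝ} {ν : Mod → ℝ}
    (hρ : ρ ∈ stdSimplex ℝ Phi) (hp : p ∈ stdSimplex ℝ Pol) (hν : ν ∈ stdSimplex ℝ Mod)
    {t : ℝ} (ht : 0 ≤ t) :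
    ENNReal.ofReal (t * (∑ M, ν M * v (c M) - ∑ φ, ρ φ * v φ) - t ^ 2)
      ≤ expectedKL q c p ν ρ := by
  set S := ∑ φ, ρ φ * v φ
  set g : Pol → Obs → ℝ := fun π o => t * (∑ φ, posterior q c ν π o φ * v φ - S) - t ^ 2
  have hmix : ∀ π, ∑ o, obsMass q ν π o * g π o = t * (∑ M, ν M * v (c M) - S) - t ^ 2 := by
    intro π
    have hterm : ∀ o, obsMass q ν π o * g π o =
        t * ∑ φ, postNum q c ν π o φ * v φ - (t * S + t ^ 2) * obsMass q ν π o := by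
      intro o
      rw [← obsMass_mul_sum_posterior_mul q c hq0 hν]
      ring
    rw [sum_congr rfl fun o _ => hterm o, sum_sub_distrib, ← mul_sum, ← mul_sum,
      sum_sum_postNum_mul q c hq1, sum_obsMass q hq1 hν]
    ring
  calc ENNReal.ofReal (t * (∑ M, ν M * v (c M) - S) - t ^ 2)
      = ENNReal.ofReal (∑ π, ∑ o, p π * obsMass q ν π o * g π o) := by
        simp only [mul_assoc, ← mul_sum, hmix, ← sum_mul, hp.2, one_mul]
    _ ≤ ∑ π, ∑ o, ENNReal.ofReal (p π * obsMass q ν π o * g π o) :=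
        (ENNReal.ofReal_sum_le _ _).trans (sum_le_sum fun π _ => ENNReal.ofReal_sum_le _ _)
    _ ≤ expectedKL q c p ν ρ := by
        refine sum_le_sum fun π _ => sum_le_sum fun o _ => ?_
        rcases (obsMass_nonneg q hq0 hν π o).eq_or_lt with h | h
        · simp [← h]
        · rw [ENNReal.ofReal_mul (mul_nonneg (hp.1 π) h.le)]
          gcongr
          exact ofReal_mul_sub_sq_le_klENN (posterior_mem_stdSimplex q c hq0 hν h) hρ hv ht

lemma digInner_le_add {Pol Obs Phi Mod : Type*} [Fintype Pol] [Fintype Obs]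
    [Fintype Phi] [Fintype Mod] [DecidableEq Phi]
    (V : Mod → Pol → ℝ) {q : Mod → Pol → Obs → ℝ} (hq0 : ∀ M π o, 0 ≤ q M π o)
    (hq1 : ∀ M π, ∑ o, q M π o = 1) (c : Mod → Phi) (piMap : Phi → Pol) {v : Phi → ℝ}
    (hv : ∀ φ, v φ ∈ Set.Icc (0 : ℝ) 1) (hval : ∀ M, V M (piMap (c M)) = v (c M))
    (Dbar : Pol → Phi → Mod → ℝ) {η : ℝ} (hη : 0 < η)
    {ρ : Phi → ℝ} {p : Pol → ℝ} {ν : Mod → ℝ}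
    (hρ : ρ ∈ stdSimplex ℝ Phi) (hp : p ∈ stdSimplex ℝ Pol) (hν : ν ∈ stdSimplex ℝ Mod) :
    digInner V q c piMap Dbar η ρ p ν ≤
      ((∑ π, p π * ∑ M, ν M * ∑ φ, ρ φ * (v φ - V M π - (1 / η) * Dbar π φ M) : ℝ) : EReal)
        + (η : EReal) := by
  set X := ∑ M, ν M * v (c M) - ∑ φ, ρ φ * v φ
  set B := ∑ π, p π * ∑ M, ν M * ∑ φ, ρ φ * (v φ - V M π - (1 / η) * Dbar π φ M)
  have hρv : ∀ π M, ∑ φ, ρ φ * (v φ - V M π - (1 / η) * Dbar π φ M)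
      = ∑ φ, ρ φ * v φ - V M π - (1 / η) * ∑ φ, ρ φ * Dbar π φ M := by
    intro π M
    simp only [mul_sub, sum_sub_distrib, ← sum_mul, hρ.2, one_mul, mul_left_comm _ (1 / η),
      ← mul_sum]
  have hgap : ∑ π, p π * ∑ M, ν M *
      (V M (piMap (c M)) - V M π - (1 / η) * ∑ φ, ρ φ * Dbar π φ M) = B + X := by
    have hX : X = ∑ π, p π * ∑ M, ν M * (v (c M) - ∑ φ, ρ φ * v φ) := by
      simp only [mul_sub, sum_sub_distrib, ← sum_mul, hν.2, hp.2, one_mul]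
      rfl
    simp only [B, hX, hρv, hval, ← sum_add_distrib, ← mul_add]
    exact sum_congr rfl fun π _ => congrArg _ (sum_congr rfl fun M _ => by ring)
  have hKL : ENNReal.ofReal (X - η) ≤ ENNReal.ofReal (1 / η) * expectedKL q c p ν ρ := by
    calc ENNReal.ofReal (X - η) = ENNReal.ofReal (1 / η) * ENNReal.ofReal (η * X - η ^ 2) := by
          rw [← ENNReal.ofReal_mul (by positivity)]
          congr 1
          field_simp
      _ ≤ _ := by
          gcongr
          exact ofReal_mul_sub_sq_le_expectedKL hq0 hq1 c hv hρ hp hν hη.le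
  calc digInner V q c piMap Dbar η ρ p ν
      ≤ ((B + X : ℝ) : EReal) - (ENNReal.ofReal (X - η) : EReal) := by
        rw [digInner, hgap]
        exact EReal.sub_le_sub le_rfl (EReal.coe_ennreal_le_coe_ennreal_iff.mpr hKL)
    _ ≤ (B : EReal) + η := by
        rw [EReal.coe_ennreal_ofReal, ← EReal.coe_sub, ← EReal.coe_add,
          EReal.coe_le_coe_iff]
        linarith [le_max_left (X - η) 0]

lemma biSup_biInf_biSup_le_add {α β γ : Type*} {s : Set α} {t : Set β} {u : Set γ}
    {f g : α → β → γ → EReal} {r : ℝ}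
    (h : ∀ a ∈ s, ∀ b ∈ t, ∀ x ∈ u, f a b x ≤ g a b x + r) :
    ⨆ a ∈ s, ⨅ b ∈ t, ⨆ x ∈ u, f a b x ≤ (⨆ a ∈ s, ⨅ b ∈ t, ⨆ x ∈ u, g a b x) + r := by
  have hsub : ∀ y z : EReal, y - r ≤ z ↔ y ≤ z + r := fun y z =>
    EReal.sub_le_iff_le_add (.inl (EReal.coe_ne_bot r)) (.inl (EReal.coe_ne_top r))
  refine iSup₂_le fun a ha => (hsub _ _).mp (le_iSup₂_of_le a ha (le_iInf₂ fun b hb => ?_))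
  refine (EReal.sub_le_sub (iInf₂_le b hb) le_rfl).trans ((hsub _ _).mpr ?_)
  exact iSup₂_le fun x hx => (h a ha b hb x hx).trans (by gcongr; exact le_iSup₂_of_le x hx le_rfl)

theorem digDec_le_oDec_add_eta_general
    {Pol Obs Phi Mod : Type*}
    [Fintype Pol] [Fintype Obs]
    [Fintype Phi] [DecidableEq Phi] [Fintype Mod]
    (V : Mod → Pol → ℝ)
    (q : Mod → Pol → Obs → ℝ)
    (hq0 : ∀ M π o, 0 ≤ q M π o) (hq1 : ∀ M π, ∑ o, q M π o = 1)
    (c : Mod → Phi) (piMap : Phi → Pol) (v : Phi → ℝ)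
    (hv : ∀ φ, v φ ∈ Set.Icc (0 : ℝ) 1)
    (hval : ∀ M, V M (piMap (c M)) = v (c M))
    (Dbar : Pol → Phi → Mod → ℝ)
    (η : ℝ) (hη : 0 < η) :
    digDec V q c piMap Dbar η ≤ oDec V v Dbar η + (η : EReal) :=
  biSup_biInf_biSup_le_add fun _ hρ _ hp _ hν =>
    digInner_le_add V hq0 hq1 c piMap hv hval Dbar hη hρ hp hν

/-- Dig-DEC is bounded by optimistic DEC plus `η` (stochastic setting): under the
partitioned-model-class assumptions, `dig-dec_η ≤ o-dec_η + η` for every `η > 0`. -/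
theorem digDec_le_oDec_add_eta
    {Pol Obs Phi Mod : Type*}
    [Fintype Pol] [Nonempty Pol] [Fintype Obs] [Nonempty Obs]
    [Fintype Phi] [Nonempty Phi] [DecidableEq Phi] [Fintype Mod] [Nonempty Mod]
    (V : Mod → Pol → ℝ) (hV : ∀ M π, V M π ∈ Set.Icc (0 : ℝ) 1)
    (q : Mod → Pol → Obs → ℝ)
    (hq0 : ∀ M π o, 0 ≤ q M π o) (hq1 : ∀ M π, ∑ o, q M π o = 1)
    (c : Mod → Phi) (piMap : Phi → Pol) (v : Phi → ℝ)
    (hv : ∀ φ, v φ ∈ Set.Icc (0 : ℝ) 1)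
    (hopt : ∀ M π, V M π ≤ V M (piMap (c M)))
    (hval : ∀ M, V M (piMap (c M)) = v (c M))
    (Dbar : Pol → Phi → Mod → ℝ) (hD : ∀ π φ M, 0 ≤ Dbar π φ M)
    (η : ℝ) (hη : 0 < η) :
    digDec V q c piMap Dbar η ≤ oDec V v Dbar η + (η : EReal) :=
  digDec_le_oDec_add_eta_general V q hq0 hq1 c piMap v hv hval Dbar η hη

end
end
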